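/- Let (B, ⊤, m, u, Δ, ε) be a locality bialgebra and (A, ⊤_A, ·) a commutative locality algebra. If φ, ψ : B → A are independent locality linear maps that are each locality multiplicative (f(cd) = f(c)f(d) for (c, d) ∈ ⊤), then their convolution product φ ⋆ ψ is locality multiplicative. If moreover B is connected, the convolution inverse φ^{⋆(−1)} of a locality algebra homomorphism φ is again a locality algebra homomorphism. -/

import Mathlib

open TensorProduct

/-- Two linear maps `φ, ψ : B → A` are independent with respect to locality
relations `rB`, `rA` if `(φ × ψ)(⊤_B) ⊆ ⊤_A`. -/
def LocIndep {K B A : Type*} [Field K] [AddCommGroup B] [Module K B]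
    [CommRing A] [Algebra K A] (rB : B → B → Prop) (rA : A → A → Prop)
    (φ ψ : B →ₗ[K] A) : Prop :=
  ∀ c d : B, rB c d → rA (φ c) (ψ d)

/-- The convolution product `φ ⋆ ψ = m ∘ (φ ⊗ ψ) ∘ Δ`. -/
noncomputable def locConv {K B A : Type*} [Field K] [CommRing B] [Bialgebra K B]
    [CommRing A] [Algebra K A] (φ ψ : B →ₗ[K] A) : B →ₗ[K] A :=
  (LinearMap.mul' K A) ∘ₗ (TensorProduct.map φ ψ) ∘ₗ Coalgebra.comul

/-!
Work in the convolution algebras `Hom(C, A)` for `C = B` and for the tensor coalgebra `C = B ⊗ B`.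
Locality of `Δ`, applied twice, shows that `Δ_{B ⊗ B}` maps the span `B ⊗_⊤ B` of related pairs
into `(B ⊗_⊤ B) ⊗ (B ⊗_⊤ B)`, so maps `B ⊗ B → A` that agree on `B ⊗_⊤ B` have convolutions that
agree there. A map `φ` is locality multiplicative iff `φ ∘ m = m_A ∘ (φ ⊗ φ)` on `B ⊗_⊤ B`. Since
`m` is a coalgebra map and `A` is commutative, `(φ ⋆ ψ) ∘ m = (φ ∘ m) ⋆ (ψ ∘ m)` and
`m_A(φ ⊗ φ) ⋆ m_A(ψ ⊗ ψ) = m_A((φ ⋆ ψ) ⊗ (φ ⋆ ψ))`. This gives the first claim, and for the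
inverse `ψ` of `φ` it gives, on `B ⊗_⊤ B`,
`ψ ∘ m = m_A(ψ ⊗ ψ) ⋆ m_A(φ ⊗ φ) ⋆ (ψ ∘ m) = m_A(ψ ⊗ ψ) ⋆ (φ ∘ m) ⋆ (ψ ∘ m) = m_A(ψ ⊗ ψ)`.

Independence of `ψ` from itself needs connectedness: `1 - φ` kills `B₀ = K·1`, so `(1 - φ)^n` kills
`B_k` for `k < n`. By the geometric series `ψ = ∑_{k<n} (1 - φ)^k + (1 - φ)^n ⋆ ψ`, each value of
`ψ` is a finite sum of values of convolution powers of `1 - φ`, and these powers are pairwise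
independent because convolution preserves independence when `Δ` is local.
-/

open WithConv LinearMap Coalgebra

section Convolution

variable {K C A : Type*} [CommRing K] [AddCommMonoid C] [Module K C]

lemma convMul_apply_eq_of_le_comap_comul [CoalgebraStruct K C] [Semiring A] [Algebra K A]
    {S : Submodule K C}
    (hS : S ≤ (Submodule.map₂ (TensorProduct.mk K C C) S S).comap comul)
    {f f' g g' : WithConv (C →ₗ[K] A)} (hf : ∀ s ∈ S, f s = f' s) (hg : ∀ s ∈ S, g s = g' s) :
    ∀ s ∈ S, (f * g) s = (f' * g') s := by
  intro s hs
  have hle : Submodule.map₂ (TensorProduct.mk K C C) S S ≤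
      eqLocus (mul' K A ∘ₗ map f.ofConv g.ofConv) (mul' K A ∘ₗ map f'.ofConv g'.ofConv) :=
    Submodule.map₂_le.2 fun a ha b hb => by simp [hf a ha, hg b hb]
  exact hle (hS hs)

variable [CommSemiring A] [Algebra K A]

lemma toConv_mul'_map_convMul [CoalgebraStruct K C] (f g h k : WithConv (C →ₗ[K] A)) :
    toConv (mul' K A ∘ₗ map f.ofConv g.ofConv) * toConv (mul' K A ∘ₗ map h.ofConv k.ofConv) =
      toConv (mul' K A ∘ₗ map (f * h).ofConv (g * k).ofConv) := by
  ext1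
  have h := algHom_comp_convMul_distrib (Algebra.TensorProduct.lmul' K (S := A))
    (toConv (map f.ofConv g.ofConv)) (toConv (map h.ofConv k.ofConv))
  rw [TensorProduct.map_convMul_map] at h
  exact h.symm

lemma toConv_mul'_map_one [Coalgebra K C] :
    toConv (mul' K A ∘ₗ map (1 : WithConv (C →ₗ[K] A)).ofConv (1 : WithConv (C →ₗ[K] A)).ofConv)
      = 1 := by
  ext x y
  simp [mul_comm]

end Convolution

section Bialgebra

variable {K B A : Type*} [CommRing K] [Semiring B] [Bialgebra K B] [Semiring A] [Algebra K A]

lemma toConv_comp_mul'_convMul (f g : WithConv (B →ₗ[K] A)) :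
    toConv ((f * g).ofConv ∘ₗ mul' K B) =
      toConv (f.ofConv ∘ₗ mul' K B) * toConv (g.ofConv ∘ₗ mul' K B) := by
  ext1
  exact convMul_comp_coalgHom_distrib f g (Bialgebra.mulCoalgHom K B)

lemma toConv_one_comp_mul' : toConv ((1 : WithConv (B →ₗ[K] A)).ofConv ∘ₗ mul' K B) = 1 := by
  ext1
  exact congrArg (Algebra.linearMap K A ∘ₗ ·) (Bialgebra.mulCoalgHom K B).counit_comp

lemma map_one_of_convMul_eq_one {f g : WithConv (B →ₗ[K] A)} (hgf : g * f = 1) (hf : f 1 = 1) :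
    g 1 = 1 := by
  have h := congrArg (fun F : WithConv (B →ₗ[K] A) => F 1) hgf
  simpa [Algebra.TensorProduct.one_def, hf] using h

end Bialgebra

section LocalTensor

variable {K B : Type*} [CommRing K] [AddCommMonoid B] [Module K B] {r : B → B → Prop}

variable (K) in
/-- The paper's `(U^⊤ ⊗ U^⊤) ∩ (B ⊗_⊤ B)`; for `U = ∅` it is `B ⊗_⊤ B`. -/
def localTensor (r : B → B → Prop) (U : Set B) : Submodule K (B ⊗[K] B) :=
  Submodule.span K {t | ∃ a b, (∀ u ∈ U, r u a) ∧ (∀ u ∈ U, r u b) ∧ r a b ∧ t = a ⊗ₜ[K] b}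

lemma tmul_mem_localTensor_empty {a b : B} (h : r a b) : a ⊗ₜ[K] b ∈ localTensor K r ∅ :=
  Submodule.subset_span ⟨a, b, by simp, by simp, h, rfl⟩

variable (K) in
def IsLocalComul [CoalgebraStruct K B] (r : B → B → Prop) : Prop :=
  ∀ (U : Set B) (c : B), (∀ u ∈ U, r u c) → comul (R := K) c ∈ localTensor K r U

variable [CoalgebraStruct K B]

lemma IsLocalComul.comul_tmul_mem (hΔ : IsLocalComul K r) (hsymm : ∀ a b, r a b → r b a)
    {c d : B} (hcd : r c d) :
    comul (R := K) (c ⊗ₜ[K] d) ∈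
      Submodule.map₂ (TensorProduct.mk K _ _) (localTensor K r ∅) (localTensor K r ∅) := by
  set T := Submodule.map₂ (TensorProduct.mk K _ _) (localTensor K r ∅) (localTensor K r ∅)
  let shuffle := (AlgebraTensorModule.tensorTensorTensorComm K K K K B B B B).toLinearMap
  have hc : comul c ∈ localTensor K r {d} := hΔ {d} c (by simpa using hsymm c d hcd)
  suffices localTensor K r {d} ≤ (T.comap shuffle).comap ((TensorProduct.mk K _ _).flip (comul d))
    from this hc
  refine Submodule.span_le.2 ?_
  rintro _ ⟨a, b, ha, hb, -, rfl⟩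
  simp only [Set.mem_singleton_iff, forall_eq] at ha hb
  have hd : comul d ∈ localTensor K r {a, b} := hΔ {a, b} d (by
    rintro u (rfl | rfl)
    exacts [hsymm _ _ ha, hsymm _ _ hb])
  suffices localTensor K r {a, b} ≤ (T.comap shuffle).comap (TensorProduct.mk K _ _ (a ⊗ₜ b))
    from this hd
  refine Submodule.span_le.2 ?_
  rintro _ ⟨a', b', ha', hb', -, rfl⟩
  simp only [Set.mem_insert_iff, Set.mem_singleton_iff, forall_eq_or_imp, forall_eq] at ha' hb'
  exact Submodule.apply_mem_map₂ _ (tmul_mem_localTensor_empty ha'.1)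
    (tmul_mem_localTensor_empty hb'.2)

lemma IsLocalComul.localTensor_le_comap_comul (hΔ : IsLocalComul K r)
    (hsymm : ∀ a b, r a b → r b a) :
    localTensor K r ∅ ≤
      (Submodule.map₂ (TensorProduct.mk K _ _) (localTensor K r ∅) (localTensor K r ∅)).comap
        comul := by
  refine Submodule.span_le.2 ?_
  rintro _ ⟨c, d, -, -, hcd, rfl⟩
  exact hΔ.comul_tmul_mem hsymm hcd

end LocalTensor

section Multiplicative

variable {K B A : Type*} [CommRing K] [Semiring B] [Bialgebra K B] [CommSemiring A] [Algebra K A]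
  {r : B → B → Prop}

lemma comp_mul'_eqOn_localTensor {f : B →ₗ[K] A} (hf : ∀ c d, r c d → f (c * d) = f c * f d) :
    ∀ s ∈ localTensor K r ∅, (f ∘ₗ mul' K B) s = (mul' K A ∘ₗ map f f) s := by
  intro s hs
  refine (Submodule.span_le (p := eqLocus _ _)).2 ?_ hs
  rintro _ ⟨c, d, -, -, hcd, rfl⟩
  simpa using hf c d hcd

variable (hΔ : IsLocalComul K r) (hsymm : ∀ a b, r a b → r b a)
include hΔ hsymm

lemma convMul_map_mul {f g : WithConv (B →ₗ[K] A)}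
    (hf : ∀ c d, r c d → f (c * d) = f c * f d) (hg : ∀ c d, r c d → g (c * d) = g c * g d)
    {c d : B} (hcd : r c d) : (f * g) (c * d) = (f * g) c * (f * g) d :=
  calc (f * g) (c * d) = toConv ((f * g).ofConv ∘ₗ mul' K B) (c ⊗ₜ d) := rfl
    _ = (toConv (f.ofConv ∘ₗ mul' K B) * toConv (g.ofConv ∘ₗ mul' K B)) (c ⊗ₜ d) := by
      rw [toConv_comp_mul'_convMul]
    _ = (toConv (mul' K A ∘ₗ map f.ofConv f.ofConv) *
          toConv (mul' K A ∘ₗ map g.ofConv g.ofConv)) (c ⊗ₜ d) :=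
      convMul_apply_eq_of_le_comap_comul (hΔ.localTensor_le_comap_comul hsymm)
        (comp_mul'_eqOn_localTensor hf) (comp_mul'_eqOn_localTensor hg) _
        (tmul_mem_localTensor_empty hcd)
    _ = (f * g) c * (f * g) d := by
      rw [toConv_mul'_map_convMul]
      rfl

lemma map_mul_of_convMul_eq_one {f g : WithConv (B →ₗ[K] A)}
    (hf : ∀ c d, r c d → f (c * d) = f c * f d) (hfg : f * g = 1) (hgf : g * f = 1)
    {c d : B} (hcd : r c d) : g (c * d) = g c * g d := by
  set F := toConv (f.ofConv ∘ₗ mul' K B)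
  set G := toConv (g.ofConv ∘ₗ mul' K B)
  set F' := toConv (mul' K A ∘ₗ map f.ofConv f.ofConv)
  set G' := toConv (mul' K A ∘ₗ map g.ofConv g.ofConv)
  have hG'F' : G' * F' = 1 := by rw [toConv_mul'_map_convMul, hgf, toConv_mul'_map_one]
  have hFG : F * G = 1 := by rw [← toConv_comp_mul'_convMul, hfg, toConv_one_comp_mul']
  have hS := hΔ.localTensor_le_comap_comul hsymm
  have hF'F : ∀ s ∈ localTensor K r ∅, (G' * F' * G) s = (G' * F * G) s :=
    convMul_apply_eq_of_le_comap_comul hS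
      (convMul_apply_eq_of_le_comap_comul hS (fun _ _ => rfl)
        fun s hs => (comp_mul'_eqOn_localTensor hf s hs).symm)
      fun _ _ => rfl
  calc g (c * d) = G (c ⊗ₜ d) := rfl
    _ = (G' * F' * G) (c ⊗ₜ d) := by rw [hG'F', one_mul]
    _ = (G' * F * G) (c ⊗ₜ d) := hF'F _ (tmul_mem_localTensor_empty hcd)
    _ = G' (c ⊗ₜ d) := by rw [mul_assoc, hFG, mul_one]
    _ = g c * g d := rfl

end Multiplicative

lemma eq_sum_pow_one_sub_add_of_mul_eq_one {R : Type*} [Ring R] {x y : R} (hxy : x * y = 1)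
    (n : ℕ) : y = ∑ i ∈ Finset.range n, (1 - x) ^ i + (1 - x) ^ n * y := by
  have h := congrArg (· * y) (geom_sum_mul_neg (1 - x) n)
  simp only [sub_sub_cancel, mul_assoc, hxy, mul_one, sub_mul, one_mul] at h
  rw [h, sub_add_cancel]

section Graded

variable {K C A : Type*} [CommRing K] [AddCommMonoid C] [Module K C] [Coalgebra K C]
  [Ring A] [Algebra K A]

variable (K) in
def IsGradedComul (Cgr : ℕ → Submodule K C) : Prop :=
  ∀ n, ∀ c ∈ Cgr n, comul (R := K) c ∈ Submodule.span K
    {t | ∃ p q a b, p + q = n ∧ a ∈ Cgr p ∧ b ∈ Cgr q ∧ t = a ⊗ₜ[K] b}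

variable {Cgr : ℕ → Submodule K C} (hgr : IsGradedComul K Cgr)
include hgr

lemma IsGradedComul.convMul_apply_eq_zero {f g : WithConv (C →ₗ[K] A)} {m m' : ℕ}
    (hf : ∀ p < m, ∀ c ∈ Cgr p, f c = 0) (hg : ∀ q < m', ∀ c ∈ Cgr q, g c = 0) :
    ∀ n < m + m', ∀ c ∈ Cgr n, (f * g) c = 0 := by
  intro n hn c hc
  refine (Submodule.span_le (p := ker (mul' K A ∘ₗ map f.ofConv g.ofConv))).2 ?_ (hgr n c hc)
  rintro _ ⟨p, q, a, b, rfl, ha, hb, rfl⟩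
  rcases lt_or_ge p m with hp | hq
  · simp [hf p hp a ha]
  · simp [hg q (by omega) b hb]

lemma IsGradedComul.pow_apply_eq_zero {f : WithConv (C →ₗ[K] A)} (hf : ∀ c ∈ Cgr 0, f c = 0) :
    ∀ k, ∀ n < k, ∀ c ∈ Cgr n, (f ^ k) c = 0 := by
  intro k
  induction k with
  | zero => intro n hn; omega
  | succ k ih =>
    rw [pow_succ]
    exact hgr.convMul_apply_eq_zero ih (m' := 1) fun p hp => by rwa [Nat.lt_one_iff.1 hp]

lemma IsGradedComul.eventually_eq_sum_pow_one_sub (htop : ⨆ i, Cgr i = ⊤)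
    {f g : WithConv (C →ₗ[K] A)} (hf : ∀ c ∈ Cgr 0, (1 - f) c = 0) (hfg : f * g = 1) (c : C) :
    ∀ᶠ n in Filter.atTop, g c = ∑ k ∈ Finset.range n, ((1 - f) ^ k) c := by
  have hvan : ∀ᶠ n in Filter.atTop, ((1 - f) ^ n * g : WithConv (C →ₗ[K] A)) c = 0 := by
    refine Submodule.iSup_induction Cgr (motive := fun c => ∀ᶠ n in Filter.atTop,
      ((1 - f) ^ n * g : WithConv (C →ₗ[K] A)) c = 0) (htop ▸ Submodule.mem_top)
      (fun i c hc => ?_) (.of_forall fun _ => map_zero _) fun _ _ h h' =>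
        (h.and h').mono fun _ h => by rw [map_add, h.1, h.2, add_zero]
    filter_upwards [Filter.eventually_gt_atTop i] with n hn
    exact hgr.convMul_apply_eq_zero (m' := 0) (hgr.pow_apply_eq_zero hf n) (by simp) i
      (by omega) c hc
  filter_upwards [hvan] with n hn
  conv_lhs => rw [eq_sum_pow_one_sub_add_of_mul_eq_one hfg n]
  simp [hn]

end Graded

structure IsLocalityAlgebraRel (K : Type*) {A : Type*} [CommSemiring K] [Semiring A] [Algebra K A]
    (r : A → A → Prop) : Prop where
  symm : ∀ a b, r a b → r b a
  zero : ∀ x, r x 0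
  add : ∀ x a b, r x a → r x b → r x (a + b)
  smul : ∀ x (k : K) a, r x a → r x (k • a)
  mul : ∀ x a b, r x a → r x b → r a b → r x (a * b)
  one : ∀ x, r x 1

namespace IsLocalityAlgebraRel

variable {K A : Type*} [CommSemiring K] [Semiring A] [Algebra K A] {r : A → A → Prop}

def polar (hr : IsLocalityAlgebraRel K r) (x : A) : Submodule K A where
  carrier := {a | r x a}
  zero_mem' := hr.zero x
  add_mem' := hr.add x _ _
  smul_mem' k _ := hr.smul x k _

lemma algebraMap_mem_polar (hr : IsLocalityAlgebraRel K r) (x : A) (k : K) :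
    algebraMap K A k ∈ hr.polar x := by
  rw [Algebra.algebraMap_eq_smul_one]
  exact hr.smul x k 1 (hr.one x)

end IsLocalityAlgebraRel

section LocIndep

variable {K B A : Type*} [Field K] [AddCommGroup B] [Module K B] [CommRing A] [Algebra K A]
  {rB : B → B → Prop} {rA : A → A → Prop} (hA : IsLocalityAlgebraRel K rA)
include hA

lemma LocIndep.symm (hsymm : ∀ a b, rB a b → rB b a) {f g : B →ₗ[K] A}
    (h : LocIndep rB rA f g) : LocIndep rB rA g f :=
  fun c d hcd => hA.symm _ _ (h d c (hsymm c d hcd))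

lemma LocIndep.sub_left {f g h : B →ₗ[K] A} (hf : LocIndep rB rA f h) (hg : LocIndep rB rA g h) :
    LocIndep rB rA (f - g) h :=
  fun c d hcd => hA.symm _ _ <| (hA.polar (h d)).sub_mem
    (hA.symm _ _ (hf c d hcd)) (hA.symm _ _ (hg c d hcd))

variable [Coalgebra K B]

lemma locIndep_one_left (f : B →ₗ[K] A) : LocIndep rB rA (1 : WithConv (B →ₗ[K] A)).ofConv f :=
  fun c d _ => hA.symm _ _ (hA.algebraMap_mem_polar (f d) (counit c))

variable (hΔ : IsLocalComul K rB)
include hΔ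

lemma LocIndep.convMul_right {f g h : WithConv (B →ₗ[K] A)}
    (hhf : LocIndep rB rA h.ofConv f.ofConv) (hhg : LocIndep rB rA h.ofConv g.ofConv)
    (hfg : LocIndep rB rA f.ofConv g.ofConv) : LocIndep rB rA h.ofConv (f * g).ofConv := by
  intro c d hcd
  have hd : comul d ∈ localTensor K rB {c} := hΔ {c} d (by simpa using hcd)
  refine (Submodule.span_le (p := (hA.polar (h c)).comap (mul' K A ∘ₗ map f.ofConv g.ofConv))).2
    ?_ hd
  rintro _ ⟨a, b, ha, hb, hab, rfl⟩
  simp only [Set.mem_singleton_iff, forall_eq] at ha hb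
  exact hA.mul _ _ _ (hhf c a ha) (hhg c b hb) (hfg a b hab)

lemma LocIndep.pow_pow (hsymm : ∀ a b, rB a b → rB b a) {f : WithConv (B →ₗ[K] A)}
    (hf : LocIndep rB rA f.ofConv f.ofConv) (k j : ℕ) :
    LocIndep rB rA (f ^ k).ofConv (f ^ j).ofConv := by
  have hpow : ∀ j, LocIndep rB rA f.ofConv (f ^ j).ofConv := by
    intro j
    induction j with
    | zero => exact (locIndep_one_left hA _).symm hA hsymm
    | succ j ih => rw [pow_succ]; exact ih.convMul_right hA hΔ hf (ih.symm hA hsymm)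
  induction k generalizing j with
  | zero => exact locIndep_one_left hA _
  | succ k ih =>
    rw [pow_succ]
    exact (((ih j).symm hA hsymm).convMul_right hA hΔ ((hpow j).symm hA hsymm)
      ((hpow k).symm hA hsymm)).symm hA hsymm

end LocIndep

lemma locIndep_of_convMul_eq_one {K B A : Type*} [Field K] [Ring B] [Bialgebra K B]
    [CommRing A] [Algebra K A] {rB : B → B → Prop} {rA : A → A → Prop}
    (hsymm : ∀ a b, rB a b → rB b a) (hA : IsLocalityAlgebraRel K rA) (hΔ : IsLocalComul K rB)
    {Bgr : ℕ → Submodule K B} (hgr : IsGradedComul K Bgr) (htop : ⨆ i, Bgr i = ⊤)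
    (hB0 : Bgr 0 = Submodule.span K {1}) {f g : WithConv (B →ₗ[K] A)}
    (hff : LocIndep rB rA f.ofConv f.ofConv) (hf1 : f 1 = 1) (hfg : f * g = 1) :
    LocIndep rB rA g.ofConv g.ofConv := by
  have hα : LocIndep rB rA (1 - f).ofConv (1 - f).ofConv := by
    have hfα : LocIndep rB rA f.ofConv (1 - f).ofConv :=
      ((locIndep_one_left hA f.ofConv).sub_left hA hff).symm hA hsymm
    exact (locIndep_one_left hA _).sub_left hA hfα
  have hα0 : ∀ c ∈ Bgr 0, (1 - f) c = 0 := by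
    rw [hB0]
    refine (Submodule.span_singleton_le_iff_mem _ (ker (1 - f).ofConv)).2 ?_
    simp [hf1]
  intro c d hcd
  obtain ⟨n, hc, hd⟩ := ((hgr.eventually_eq_sum_pow_one_sub htop hα0 hfg c).and
    (hgr.eventually_eq_sum_pow_one_sub htop hα0 hfg d)).exists
  rw [hc, hd]
  exact (hA.polar _).sum_mem fun j _ => hA.symm _ _ <| (hA.polar _).sum_mem fun k _ =>
    hA.symm _ _ (hα.pow_pow hA hΔ hsymm k j c d hcd)

theorem locality_bialgebra_convolution_multiplicative_general
    {K B A : Type*} [Field K] [CommRing B] [Bialgebra K B]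
    [CommRing A] [Algebra K A]
    (rB : B → B → Prop) (rA : A → A → Prop)
    (hsymB : ∀ a b, rB a b → rB b a) (hsymA : ∀ a b, rA a b → rA b a)
    (hzeroA : ∀ x : A, rA x 0)
    (haddA : ∀ x a b : A, rA x a → rA x b → rA x (a + b))
    (hsmulA : ∀ (x : A) (k : K) (a : A), rA x a → rA x (k • a))
    (hcompatA : ∀ x a b : A, rA x a → rA x b → rA a b → rA x (a * b))
    (honeA : ∀ x : A, rA x 1)
    -- locality compatibility of the coproduct of B
    (hΔ : ∀ (U : Set B) (c : B), (∀ u ∈ U, rB u c) →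
      Coalgebra.comul (R := K) c ∈ Submodule.span K
        {t : B ⊗[K] B | ∃ a b : B, (∀ u ∈ U, rB u a) ∧ (∀ u ∈ U, rB u b) ∧
          rB a b ∧ t = a ⊗ₜ[K] b})
    -- the grading making B connected
    (Bgr : ℕ → Submodule K B)
    (hinternal : DirectSum.IsInternal Bgr)
    (hB0 : Bgr 0 = Submodule.span K {(1 : B)})
    (hconn : ∀ (U : Set B) (n : ℕ) (c : B), c ∈ Bgr n → (∀ u ∈ U, rB u c) →
      Coalgebra.comul (R := K) c ∈ Submodule.span K
        {t : B ⊗[K] B | ∃ (p q : ℕ) (a b : B), p + q = n ∧ a ∈ Bgr p ∧ b ∈ Bgr q ∧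
          (∀ u ∈ U, rB u a) ∧ (∀ u ∈ U, rB u b) ∧ rB a b ∧ t = a ⊗ₜ[K] b}) :
    -- (1) convolution of independent locality multiplicative maps is
    --     locality multiplicative
    (∀ φ ψ : B →ₗ[K] A, LocIndep rB rA φ φ → LocIndep rB rA ψ ψ →
      LocIndep rB rA φ ψ →
      (∀ c d : B, rB c d → φ (c * d) = φ c * φ d) →
      (∀ c d : B, rB c d → ψ (c * d) = ψ c * ψ d) →
      ∀ c d : B, rB c d → (locConv φ ψ) (c * d) = (locConv φ ψ) c * (locConv φ ψ) d) ∧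
    -- (2) the convolution inverse of a locality algebra homomorphism is again one
    (∀ φ ψ : B →ₗ[K] A, LocIndep rB rA φ φ →
      (∀ c d : B, rB c d → φ (c * d) = φ c * φ d) → φ 1 = 1 →
      locConv φ ψ = (Algebra.linearMap K A) ∘ₗ Coalgebra.counit →
      locConv ψ φ = (Algebra.linearMap K A) ∘ₗ Coalgebra.counit →
      (LocIndep rB rA ψ ψ ∧
        (∀ c d : B, rB c d → ψ (c * d) = ψ c * ψ d) ∧ ψ 1 = 1)) := by
  have hA : IsLocalityAlgebraRel K rA := ⟨hsymA, hzeroA, haddA, hsmulA, hcompatA, honeA⟩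
  have hgr : IsGradedComul K Bgr := by
    refine fun n c hc => Submodule.span_mono ?_ (hconn ∅ n c hc (by simp))
    rintro _ ⟨p, q, a, b, hpq, ha, hb, -, -, -, rfl⟩
    exact ⟨p, q, a, b, hpq, ha, hb, rfl⟩
  refine ⟨fun φ ψ _ _ _ hφ hψ _ _ hcd => convMul_map_mul hΔ hsymB hφ hψ hcd,
    fun φ ψ hφφ hφ hφ1 hφψ hψφ => ?_⟩
  have hφψ' : toConv φ * toConv ψ = 1 := WithConv.ext hφψ
  have hψφ' : toConv ψ * toConv φ = 1 := WithConv.ext hψφ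
  exact ⟨locIndep_of_convMul_eq_one hsymB hA hΔ hgr hinternal.submodule_iSup_eq_top hB0
      hφφ hφ1 hφψ', fun _ _ => map_mul_of_convMul_eq_one hΔ hsymB hφ hφψ' hψφ',
    map_one_of_convMul_eq_one hψφ' hφ1⟩

/-- Let `(B, ⊤, m, u, Δ, ε)` be a locality bialgebra and `(A, ⊤_A)`
a commutative locality algebra. If `φ, ψ : B → A` are independent locality linear
maps that are locality multiplicative, then `φ ⋆ ψ` is locality multiplicative.
If moreover `B` is connected, the convolution inverse of a locality algebra
homomorphism `φ` is again a locality algebra homomorphism. -/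
theorem locality_bialgebra_convolution_multiplicative
    {K B A : Type*} [Field K] [CommRing B] [Bialgebra K B]
    [CommRing A] [Algebra K A]
    (rB : B → B → Prop) (rA : A → A → Prop)
    (hsymB : ∀ a b, rB a b → rB b a) (hsymA : ∀ a b, rA a b → rA b a)
    (hzeroB : ∀ x : B, rB x 0) (hzeroA : ∀ x : A, rA x 0)
    (haddB : ∀ x a b : B, rB x a → rB x b → rB x (a + b))
    (haddA : ∀ x a b : A, rA x a → rA x b → rA x (a + b))
    (hsmulB : ∀ (x : B) (k : K) (a : B), rB x a → rB x (k • a))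
    (hsmulA : ∀ (x : A) (k : K) (a : A), rA x a → rA x (k • a))
    (hcompatB : ∀ x a b : B, rB x a → rB x b → rB a b → rB x (a * b))
    (hcompatA : ∀ x a b : A, rA x a → rA x b → rA a b → rA x (a * b))
    (honeB : ∀ x : B, rB x 1) (honeA : ∀ x : A, rA x 1)
    -- locality compatibility of the coproduct of B
    (hΔ : ∀ (U : Set B) (c : B), (∀ u ∈ U, rB u c) →
      Coalgebra.comul (R := K) c ∈ Submodule.span K
        {t : B ⊗[K] B | ∃ a b : B, (∀ u ∈ U, rB u a) ∧ (∀ u ∈ U, rB u b) ∧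
          rB a b ∧ t = a ⊗ₜ[K] b})
    -- the grading making B connected
    (Bgr : ℕ → Submodule K B)
    (hinternal : DirectSum.IsInternal Bgr)
    (hB0 : Bgr 0 = Submodule.span K {(1 : B)})
    (hkerε : LinearMap.ker (Coalgebra.counit (R := K) (A := B)) =
      ⨆ (n : ℕ) (_ : 1 ≤ n), Bgr n)
    (hconn : ∀ (U : Set B) (n : ℕ) (c : B), c ∈ Bgr n → (∀ u ∈ U, rB u c) →
      Coalgebra.comul (R := K) c ∈ Submodule.span K
        {t : B ⊗[K] B | ∃ (p q : ℕ) (a b : B), p + q = n ∧ a ∈ Bgr p ∧ b ∈ Bgr q ∧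
          (∀ u ∈ U, rB u a) ∧ (∀ u ∈ U, rB u b) ∧ rB a b ∧ t = a ⊗ₜ[K] b}) :
    -- (1) convolution of independent locality multiplicative maps is
    --     locality multiplicative
    (∀ φ ψ : B →ₗ[K] A, LocIndep rB rA φ φ → LocIndep rB rA ψ ψ →
      LocIndep rB rA φ ψ →
      (∀ c d : B, rB c d → φ (c * d) = φ c * φ d) →
      (∀ c d : B, rB c d → ψ (c * d) = ψ c * ψ d) →
      ∀ c d : B, rB c d → (locConv φ ψ) (c * d) = (locConv φ ψ) c * (locConv φ ψ) d) ∧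
    -- (2) the convolution inverse of a locality algebra homomorphism is again one
    (∀ φ ψ : B →ₗ[K] A, LocIndep rB rA φ φ →
      (∀ c d : B, rB c d → φ (c * d) = φ c * φ d) → φ 1 = 1 →
      locConv φ ψ = (Algebra.linearMap K A) ∘ₗ Coalgebra.counit →
      locConv ψ φ = (Algebra.linearMap K A) ∘ₗ Coalgebra.counit →
      (LocIndep rB rA ψ ψ ∧
        (∀ c d : B, rB c d → ψ (c * d) = ψ c * ψ d) ∧ ψ 1 = 1)) :=
  locality_bialgebra_convolution_multiplicative_general rB rA hsymB hsymA hzeroA haddA hsmulA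
    hcompatA honeA hΔ Bgr hinternal hB0 hconn
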